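/- arXiv:2304.11506 — 4 statements merged into one kernel-verified Lean document; each statement's English description precedes it below -/
import Mathlib

section
/- Let P and Q be coprime integers with P ≥ 2 and Q ≥ 2. Then the minimum over integers r, s with 1 ≤ r ≤ P−1 and 1 ≤ s ≤ Q−1 of the rational number h_{r,s} := ((rQ − sP)² − (P−Q)²)/(4PQ) is equal to (1 − (P−Q)²)/(4PQ); equivalently, the minimum of (rQ − sP)² over this range of (r,s) equals 1. -/
open Complex

noncomputable section

/-- The upper half-plane as a subset of ℂ. -/
def UH : Set ℂ := {z : ℂ | 0 < z.im}

/-- `e(z) = exp(2πiz)`. -/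
def ee (z : ℂ) : ℂ := Complex.exp (2 * Real.pi * Complex.I * z)

/-- Dedekind eta function `η(τ) = e(τ/24) ∏_{n≥1} (1 - e(nτ))`. -/
def etaF (τ : ℂ) : ℂ := ee (τ / 24) * ∏' n : ℕ, (1 - ee ((n + 1) * τ))

/-- `η^α(τ) = e(ατ/24) ∏_{n≥1} (1 - e(nτ))^α`, principal branch factors. -/
def etaPow (α : ℝ) (τ : ℂ) : ℂ :=
  ee ((α : ℂ) * τ / 24) * ∏' n : ℕ, (1 - ee ((n + 1) * τ)) ^ (α : ℂ)

/-- `θ_{a,b}(τ) = Σ_{n∈ℤ} e(τ)^{a (n + b/(2a))²}`. -/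
def thetaAB (a b : ℝ) (τ : ℂ) : ℂ :=
  ∑' n : ℤ, ee τ ^ (((a * ((n : ℝ) + b / (2 * a)) ^ 2 : ℝ)) : ℂ)

/-- Theta constant `Θ_{(m₁,m₂)}(τ) = Σ_{n∈ℤ} e(τ(n+m₁)²/2 + (n+m₁)m₂)`. -/
def thetaConst (m₁ m₂ : ℝ) (τ : ℂ) : ℂ :=
  ∑' n : ℤ, ee (τ * ((n : ℂ) + (m₁ : ℂ)) ^ 2 / 2 + ((n : ℂ) + (m₁ : ℂ)) * (m₂ : ℂ))

/-- Character `ch_{2,p;1,s} = (θ_{2p,p-2s} - θ_{2p,p+2s})/η`. -/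
def chMin (p s : ℤ) (τ : ℂ) : ℂ :=
  (thetaAB (2 * (p : ℝ)) ((p : ℝ) - 2 * (s : ℝ)) τ
    - thetaAB (2 * (p : ℝ)) ((p : ℝ) + 2 * (s : ℝ)) τ) / etaF τ

/-- Ibukiyama modular form `f_r(τ) = e((p-1)(r-1)/(4p)) Θ_{(r/(2p),1/2)}(pτ) / η^{3/p}(τ)`. -/
def ibuki (p r : ℤ) (τ : ℂ) : ℂ :=
  ee ((((p : ℂ) - 1) * ((r : ℂ) - 1)) / (4 * (p : ℂ)))
    * thetaConst ((r : ℝ) / (2 * (p : ℝ))) (1 / 2) ((p : ℂ) * τ) / etaPow (3 / (p : ℝ)) τ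

/-- `D = (2πi)⁻¹ d/dτ`. -/
def Dop (f : ℂ → ℂ) (τ : ℂ) : ℂ := (2 * Real.pi * Complex.I)⁻¹ * deriv f τ

/-- Normalized Eisenstein series `E₂`. -/
def E2 (τ : ℂ) : ℂ :=
  1 - 24 * ∑' n : ℕ, ((ArithmeticFunction.sigma 1) (n + 1) : ℂ) * ee τ ^ (n + 1)

/-- Normalized Eisenstein series `E₄`. -/
def E4 (τ : ℂ) : ℂ :=
  1 + 240 * ∑' n : ℕ, ((ArithmeticFunction.sigma 3) (n + 1) : ℂ) * ee τ ^ (n + 1)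

/-- Normalized Eisenstein series `E₆`. -/
def E6 (τ : ℂ) : ℂ :=
  1 - 504 * ∑' n : ℕ, ((ArithmeticFunction.sigma 5) (n + 1) : ℂ) * ee τ ^ (n + 1)

def E8 (τ : ℂ) : ℂ := E4 τ ^ 2
def E10 (τ : ℂ) : ℂ := E4 τ * E6 τ
def E14 (τ : ℂ) : ℂ := E4 τ ^ 2 * E6 τ

/-- Discriminant `Δ = q ∏_{n≥1}(1-qⁿ)²⁴`. -/
def Δfun (τ : ℂ) : ℂ := ee τ * ∏' n : ℕ, (1 - ee τ ^ (n + 1)) ^ 24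

/-- Serre operator `𝔡_k f = Df - (k/12) E₂ f`. -/
def serre (k : ℝ) (f : ℂ → ℂ) (τ : ℂ) : ℂ := Dop f τ - ((k : ℂ) / 12) * E2 τ * f τ

/-- Iterated Serre operator `𝔡_k^i = 𝔡_{k+2(i-1)} ∘ ⋯ ∘ 𝔡_{k+2} ∘ 𝔡_k`. -/
def serreIter (k : ℝ) : ℕ → (ℂ → ℂ) → (ℂ → ℂ)
  | 0, f => f
  | (i + 1), f => serre (k + 2 * (i : ℝ)) (serreIter k i f)

/-- A holomorphic modular form of integral weight `k` on `SL₂(ℤ)`: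
holomorphic on the upper half-plane, weight-`k` invariant, and bounded near `i∞`. -/
def IsHolModularForm (k : ℤ) (P : ℂ → ℂ) : Prop :=
  DifferentiableOn ℂ P UH ∧
  (∀ γ : Matrix.SpecialLinearGroup (Fin 2) ℤ, ∀ τ ∈ UH,
      P ((((γ 0 0 : ℤ) : ℂ) * τ + ((γ 0 1 : ℤ) : ℂ)) / (((γ 1 0 : ℤ) : ℂ) * τ + ((γ 1 1 : ℤ) : ℂ)))
        = (((γ 1 0 : ℤ) : ℂ) * τ + ((γ 1 1 : ℤ) : ℂ)) ^ k * P τ) ∧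
  ∃ C A : ℝ, ∀ τ ∈ UH, A ≤ τ.im → ‖P τ‖ ≤ C

end

/-! `h_{r,s}` is increasing in `(rQ - sP)²`, a nonzero square because `P ∤ rQ` for `0 < r < P`;
Bézout's identity provides `(r, s)` in range with `rQ - sP = 1`. -/

namespace MinimalModel

variable {P Q : ℤ}

theorem mul_sub_mul_ne_zero (hPQ : IsCoprime P Q) {r : ℤ} (s : ℤ) (hr : 0 < r) (hrP : r < P) :
    r * Q - s * P ≠ 0 := by
  intro h
  have hPr : P ∣ r := hPQ.dvd_of_dvd_mul_right ⟨s, by linarith⟩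
  exact absurd (Int.le_of_dvd hr hPr) (not_le.mpr hrP)

theorem one_le_sq_mul_sub_mul (hPQ : IsCoprime P Q) {r : ℤ} (s : ℤ) (hr : 0 < r) (hrP : r < P) :
    1 ≤ (r * Q - s * P) ^ 2 := by
  have h := Int.one_le_abs (mul_sub_mul_ne_zero hPQ s hr hrP)
  nlinarith [sq_abs (r * Q - s * P)]

/-- With `a P + b Q = 1`, take `r = b mod P`; it is nonzero because `P ∤ 1`, and then the bounds
on `s` follow from `s P = r Q - 1 ∈ (0, P Q)`. -/
theorem exists_mul_sub_mul_eq_one (hPQ : IsCoprime P Q) (hP : 2 ≤ P) (hQ : 2 ≤ Q) :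
    ∃ r s : ℤ, 1 ≤ r ∧ r ≤ P - 1 ∧ 1 ≤ s ∧ s ≤ Q - 1 ∧ r * Q - s * P = 1 := by
  obtain ⟨a, b, hab⟩ := hPQ
  have hP0 : 0 < P := by omega
  have hrs : b % P * Q - -(a + b / P * Q) * P = 1 := by
    rw [Int.emod_def]
    linear_combination hab
  have hr0 : 0 ≤ b % P := Int.emod_nonneg b hP0.ne'
  have hrP : b % P < P := Int.emod_lt_of_pos b hP0
  generalize b % P = r at hrs hr0 hrP
  generalize -(a + b / P * Q) = s at hrs
  have hr1 : 1 ≤ r := by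
    by_contra! hr
    have hP1 : P ∣ 1 := ⟨-s, by rw [← hrs, show r = 0 by omega]; ring⟩
    have := Int.le_of_dvd one_pos hP1
    omega
  refine ⟨r, s, hr1, by omega, ?_, ?_, hrs⟩ <;> nlinarith

end MinimalModel

open MinimalModel

/-- minimum of the conformal weights of the minimal model of type (P,Q). -/
theorem stmt_0 (P Q : ℤ) (hP : 2 ≤ P) (hQ : 2 ≤ Q) (hPQ : IsCoprime P Q) :
    IsLeast { h : ℚ | ∃ r s : ℤ, 1 ≤ r ∧ r ≤ P - 1 ∧ 1 ≤ s ∧ s ≤ Q - 1 ∧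
        h = (((r : ℚ) * Q - (s : ℚ) * P) ^ 2 - ((P : ℚ) - Q) ^ 2) / (4 * (P : ℚ) * Q) }
      ((1 - ((P : ℚ) - Q) ^ 2) / (4 * (P : ℚ) * Q)) ∧
    IsLeast { m : ℤ | ∃ r s : ℤ, 1 ≤ r ∧ r ≤ P - 1 ∧ 1 ≤ s ∧ s ≤ Q - 1 ∧
        m = (r * Q - s * P) ^ 2 } 1 := by
  obtain ⟨r, s, hr1, hrP, hs1, hsQ, hrs⟩ := exists_mul_sub_mul_eq_one hPQ hP hQ
  have hrsℚ : (r : ℚ) * Q - s * P = 1 := by exact_mod_cast hrs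
  have hPQpos : (0 : ℚ) < 4 * P * Q := by
    have : (0 : ℚ) < P := by exact_mod_cast (by omega : (0 : ℤ) < P)
    have : (0 : ℚ) < Q := by exact_mod_cast (by omega : (0 : ℤ) < Q)
    positivity
  refine ⟨⟨⟨r, s, hr1, hrP, hs1, hsQ, by rw [hrsℚ, one_pow]⟩, ?_⟩,
    ⟨⟨r, s, hr1, hrP, hs1, hsQ, by rw [hrs, one_pow]⟩, ?_⟩⟩
  · rintro _ ⟨r', s', hr', hr'P, -, -, rfl⟩
    have hsq : (1 : ℚ) ≤ ((r' : ℚ) * Q - s' * P) ^ 2 := by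
      exact_mod_cast one_le_sq_mul_sub_mul hPQ s' (by omega) (by omega)
    gcongr
  · rintro _ ⟨r', s', hr', hr'P, -, -, rfl⟩
    exact one_le_sq_mul_sub_mul hPQ s' (by omega) (by omega)
end

section
/- Let r be a positive integer and set p = 2r + 3. Then the least positive integer n such that n·(3(p − 2s)² − p)/(24p) is an integer for every integer s with 0 ≤ s ≤ (p−1)/2 is equal to 12(2r+3)/(gcd(4,r)·gcd(3,r)). Equivalently, the least common multiple of the denominators of the irreducible fractions (3(p−2s)² − p)/(24p), for 0 ≤ s ≤ (p−1)/2, equals 12(2r+3)/(gcd(4,r)·gcd(3,r)). -/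
open Complex

/-!
Put `p = 2r + 3` and `t = r + 1 - s`. Then `p - 2s = 2t + 1` and `3(2t + 1)² - p = 2(6t(t + 1) - r)`,
so the exponent is `(6t(t + 1) - r)/(12p)`. As `12 ∣ 6t(t + 1)`, `g = gcd(12, r)` divides every
numerator and `n = 12p/g` works. Conversely `t = 0` and `t = 1` force `12p ∣ nr` and `12p ∣ n(12 - r)`,
hence `12p ∣ gcd(nr, 12n) = ng`, i.e. `12p/g ∣ n`. Finally `gcd(4, r)·gcd(3, r) = gcd(12, r)`.
-/

theorem exists_intCast_eq_div_iff_dvd {a b : ℤ} (hb : b ≠ 0) :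
    (∃ m : ℤ, (a : ℚ) / b = m) ↔ b ∣ a := by
  constructor
  · rintro ⟨m, hm⟩
    rw [div_eq_iff (Int.cast_ne_zero.mpr hb)] at hm
    exact ⟨m, by rw [mul_comm]; exact_mod_cast hm⟩
  · rintro ⟨m, rfl⟩
    exact ⟨m, by push_cast; field_simp⟩

theorem Int.dvd_div_mul_of_dvd {M g a : ℤ} (hM : g ∣ M) (ha : g ∣ a) : M ∣ M / g * a := by
  obtain ⟨k, rfl⟩ := ha
  exact ⟨k, by rw [← mul_assoc, Int.ediv_mul_cancel hM]⟩

theorem Nat.div_gcd_dvd_of_dvd_mul_of_dvd_mul {M n a b : ℕ} (hg : 0 < Nat.gcd a b)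
    (hM : Nat.gcd a b ∣ M) (ha : M ∣ n * a) (hb : M ∣ n * b) : M / Nat.gcd a b ∣ n := by
  rw [Nat.div_dvd_iff_dvd_mul hM hg, mul_comm, ← Nat.gcd_mul_left]
  exact Nat.dvd_gcd ha hb

theorem gcd_four_mul_gcd_three (r : ℕ) : Nat.gcd 4 r * Nat.gcd 3 r = Nat.gcd 12 r := by
  simpa [Nat.gcd_comm] using (Nat.Coprime.gcd_mul r (by norm_num : Nat.Coprime 4 3)).symm

theorem twelve_dvd_six_mul_mul_succ (t : ℤ) : 12 ∣ 6 * (t * (t + 1)) := by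
  obtain ⟨j, hj⟩ := Int.even_mul_succ_self t
  exact ⟨j, by rw [hj]; ring⟩

theorem gcd_twelve_dvd_six_mul_mul_succ_sub (r : ℕ) (t : ℤ) :
    (Nat.gcd 12 r : ℤ) ∣ 6 * (t * (t + 1)) - r :=
  dvd_sub (Int.natCast_dvd.mpr (Nat.gcd_dvd_left 12 r) |>.trans (twelve_dvd_six_mul_mul_succ t))
    (Int.natCast_dvd_natCast.mpr (Nat.gcd_dvd_right 12 r))

theorem exists_int_eq_mul_leading_exponent_iff (r s n : ℕ) :
    (∃ m : ℤ, (n : ℚ) * ((3 * ((2 * r + 3 : ℚ) - 2 * s) ^ 2 - (2 * r + 3))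
        / (24 * (2 * r + 3))) = m) ↔
      12 * (2 * (r : ℤ) + 3) ∣ n * (6 * ((r + 1 - s) * (r + 1 - s + 1)) - r) := by
  rw [← exists_intCast_eq_div_iff_dvd (by positivity)]
  have hq : (n : ℚ) * ((3 * ((2 * r + 3 : ℚ) - 2 * s) ^ 2 - (2 * r + 3)) / (24 * (2 * r + 3)))
      = ((n * (6 * ((r + 1 - s) * (r + 1 - s + 1)) - r) : ℤ) : ℚ) / ((12 * (2 * r + 3) : ℤ) : ℚ) := by
    push_cast
    field_simp
    ring
  rw [hq]

theorem stmt_2_general (r : ℕ) :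
    IsLeast { n : ℕ | 0 < n ∧ ∀ s : ℕ, s ≤ (2 * r + 3 - 1) / 2 →
        ∃ m : ℤ, (n : ℚ) * ((3 * ((2 * r + 3 : ℚ) - 2 * s) ^ 2 - (2 * r + 3))
            / (24 * (2 * r + 3))) = (m : ℚ) }
      (12 * (2 * r + 3) / (Nat.gcd 4 r * Nat.gcd 3 r)) := by
  simp only [gcd_four_mul_gcd_three, exists_int_eq_mul_leading_exponent_iff]
  have hg : 0 < Nat.gcd 12 r := Nat.gcd_pos_of_pos_left r (by norm_num)
  have hgM : Nat.gcd 12 r ∣ 12 * (2 * r + 3) := (Nat.gcd_dvd_left 12 r).mul_right _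
  refine ⟨⟨Nat.div_pos (Nat.le_of_dvd (by positivity) hgM) hg, fun s _ => ?_⟩, ?_⟩
  · exact_mod_cast Int.dvd_div_mul_of_dvd (by exact_mod_cast hgM)
      (gcd_twelve_dvd_six_mul_mul_succ_sub r _)
  · rintro n ⟨hn, hdvd⟩
    have h₀ := hdvd (r + 1) (by omega)
    have h₁ := hdvd r (by omega)
    push_cast at h₀ h₁
    have hr : 12 * (2 * (r : ℤ) + 3) ∣ n * r := (dvd_neg.mpr h₀).trans (dvd_of_eq (by ring))
    have h12 : 12 * (2 * (r : ℤ) + 3) ∣ n * 12 := (dvd_add h₁ hr).trans (dvd_of_eq (by ring))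
    exact Nat.le_of_dvd hn
      (Nat.div_gcd_dvd_of_dvd_mul_of_dvd_mul hg hgM (by exact_mod_cast h12) (by exact_mod_cast hr))

/-- the least positive integer `n` with `n·(3(p-2s)² - p)/(24p) ∈ ℤ`
for all `0 ≤ s ≤ (p-1)/2`, where `p = 2r+3`, is `12(2r+3)/(gcd(4,r)·gcd(3,r))`. -/
theorem stmt_2 (r : ℕ) (hr : 0 < r) :
    IsLeast { n : ℕ | 0 < n ∧ ∀ s : ℕ, s ≤ (2 * r + 3 - 1) / 2 →
        ∃ m : ℤ, (n : ℚ) * ((3 * ((2 * r + 3 : ℚ) - 2 * s) ^ 2 - (2 * r + 3))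
            / (24 * (2 * r + 3))) = (m : ℚ) }
      (12 * (2 * r + 3) / (Nat.gcd 4 r * Nat.gcd 3 r)) :=
  stmt_2_general r
end

section
/- Let p > 3 be an odd integer and let r be an odd integer with 1 ≤ r ≤ p−2. Then for every τ ∈ ℍ, f_r(τ + 1) = e((r² − 1)/(8p)) · f_r(τ). Equivalently, since the multiplier v_p(T) equals e((p² − 1)/(8p)), the action π_p(T) multiplies f_r by e((r² − p²)/(8p)). -/
open Complex

/-! Under `τ ↦ τ + 1` the theta factor `Θ(pτ)` picks up `e(r²/8p)` (the cross terms
`n(pn + r)/2` are integers since `p`, `r` are odd) and `η^{3/p}` picks up `e(1/8p)`;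
their quotient is `e((r² - 1)/8p)`. -/

lemma ee_add (a b : ℂ) : ee (a + b) = ee a * ee b := by
  rw [ee, ee, ee, ← Complex.exp_add]; ring_nf

lemma ee_ne_zero (z : ℂ) : ee z ≠ 0 := Complex.exp_ne_zero _

lemma ee_add_intCast (z : ℂ) (n : ℤ) : ee (z + n) = ee z := by
  have hn : ee n = 1 := by
    rw [ee, mul_comm, Complex.exp_int_mul_two_pi_mul_I]
  rw [ee_add, hn, mul_one]

lemma etaPow_add_one (α : ℝ) (τ : ℂ) :
    etaPow α (τ + 1) = ee ((α : ℂ) / 24) * etaPow α τ := by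
  have hfactor (n : ℕ) : ee (((n : ℂ) + 1) * (τ + 1)) = ee (((n : ℂ) + 1) * τ) := by
    simpa [mul_add] using ee_add_intCast (((n : ℂ) + 1) * τ) (n + 1)
  rw [etaPow, etaPow, mul_add, mul_one, add_div, ee_add]
  simp only [hfactor]
  ring

lemma thetaConst_mul_add_one {p r : ℤ} (hp : Odd p) (hr : Odd r) (τ : ℂ) :
    thetaConst ((r : ℝ) / (2 * (p : ℝ))) (1 / 2) ((p : ℂ) * (τ + 1))
      = ee ((r : ℂ) ^ 2 / (8 * (p : ℂ)))
        * thetaConst ((r : ℝ) / (2 * (p : ℝ))) (1 / 2) ((p : ℂ) * τ) := by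
  have hp0 : (p : ℂ) ≠ 0 := Int.cast_ne_zero.mpr (by rintro rfl; simp at hp)
  rw [thetaConst, thetaConst, ← tsum_mul_left]
  refine tsum_congr fun n ↦ ?_
  obtain ⟨k, hk⟩ : Even (n * (p * n + r)) := by
    rcases Int.even_or_odd n with hn | hn
    · exact hn.mul_right _
    · exact ((hp.mul hn).add_odd hr).mul_left _
  have hkc : (n : ℂ) * (p * n + r) = k + k := by exact_mod_cast hk
  rw [← ee_add]
  conv_rhs => rw [← ee_add_intCast _ k]
  congr 1
  push_cast
  field_simp
  linear_combination (32 * (p : ℂ)) * hkc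

theorem ibuki_add_one {p r : ℤ} (hp : Odd p) (hr : Odd r) (τ : ℂ) :
    ibuki p r (τ + 1) = ee (((r : ℂ) ^ 2 - 1) / (8 * (p : ℂ))) * ibuki p r τ := by
  have hp0 : (p : ℂ) ≠ 0 := Int.cast_ne_zero.mpr (by rintro rfl; simp at hp)
  have hmult : ee ((r : ℂ) ^ 2 / (8 * p))
      = ee (((r : ℂ) ^ 2 - 1) / (8 * p)) * ee (((3 / (p : ℝ) : ℝ) : ℂ) / 24) := by
    rw [← ee_add]
    congr 1
    push_cast
    field_simp
    ring
  rw [ibuki, ibuki, thetaConst_mul_add_one hp hr, etaPow_add_one, hmult]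
  have := ee_ne_zero (((3 / (p : ℝ) : ℝ) : ℂ) / 24)
  field_simp

theorem stmt_5_general (p r : ℤ) (hpodd : Odd p) (hrodd : Odd r) (τ : ℂ) :
    ibuki p r (τ + 1) = ee (((r : ℂ) ^ 2 - 1) / (8 * (p : ℂ))) * ibuki p r τ ∧
    ibuki p r (τ + 1)
      = ee (((p : ℂ) ^ 2 - 1) / (8 * (p : ℂ)))
          * (ee (((r : ℂ) ^ 2 - (p : ℂ) ^ 2) / (8 * (p : ℂ))) * ibuki p r τ) := by
  refine ⟨ibuki_add_one hpodd hrodd τ, ?_⟩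
  rw [ibuki_add_one hpodd hrodd τ, ← mul_assoc, ← ee_add]
  ring_nf

/-- `f_r(τ+1) = e((r²-1)/(8p))·f_r(τ)`; equivalently, since
`v_p(T) = e((p²-1)/(8p))`, the action of `T` multiplies `f_r` by `e((r²-p²)/(8p))`. -/
theorem stmt_5 (p r : ℤ) (hp : 3 < p) (hpodd : Odd p) (hrodd : Odd r)
    (hr1 : 1 ≤ r) (hr2 : r ≤ p - 2) (τ : ℂ) (hτ : τ ∈ UH) :
    ibuki p r (τ + 1) = ee (((r : ℂ) ^ 2 - 1) / (8 * (p : ℂ))) * ibuki p r τ ∧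
    ibuki p r (τ + 1)
      = ee (((p : ℂ) ^ 2 - 1) / (8 * (p : ℂ)))
          * (ee (((r : ℂ) ^ 2 - (p : ℂ) ^ 2) / (8 * (p : ℂ))) * ibuki p r τ) :=
  stmt_5_general p r hpodd hrodd τ
end

section
/- Let k ∈ ℝ, ℓ ∈ ℝ, n a nonnegative integer, and f : ℍ → ℂ a holomorphic function. Then 𝔡_{k+ℓ/2}^n(η^ℓ · f) = η^ℓ · 𝔡_k^n(f) on ℍ. Consequently, if f satisfies the modular linear differential equation 𝔡_k^n(f) + Σ_{j=2}^n P_{2j}·𝔡_k^{n−j}(f) = 0 for holomorphic functions P_{2j} on ℍ, then g := η^ℓ·f satisfies 𝔡_{k+ℓ/2}^n(g) + Σ_{j=2}^n P_{2j}·𝔡_{k+ℓ/2}^{n−j}(g) = 0. -/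
open Complex

/-!
On ℍ put `Λ(τ) = 2πiτ/24 + Σ_{n≥1} log(1 - qⁿ)`, a holomorphic function (the series converges
locally uniformly). Since each factor of `η^ℓ` is `exp(ℓ log(1 - qⁿ))`, we get `η^ℓ = exp(ℓΛ)`,
in particular `η = exp Λ`, so `Λ'` is the logarithmic derivative of `η`, which is `(πi/12)E₂`.
Hence `D(η^ℓ) = (ℓ/24)E₂η^ℓ`, and the Leibniz rule turns this into
`𝔡_{k+ℓ/2}(η^ℓ g) = η^ℓ 𝔡_k g` for holomorphic `g`. Iterating gives the first claim; multiplying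
the differential equation of `f` by `η^ℓ` gives the second.
-/

open Filter Topology
open UpperHalfPlane hiding I
open scoped Real

lemma isOpen_UH : IsOpen UH := isOpen_upperHalfPlaneSet

lemma ee_eq_qParam (z : ℂ) : ee z = Function.Periodic.qParam 1 z := by
  simp [ee, Function.Periodic.qParam]

lemma ee_natCast_add_one_mul (n : ℕ) (z : ℂ) : ee ((n + 1) * z) = ee z ^ (n + 1) := by
  rw [ee, ee, ← exp_nat_mul]
  push_cast
  ring_nf

lemma norm_ee_lt_one {z : ℂ} (hz : z ∈ UH) : ‖ee z‖ < 1 := by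
  simpa [ee_eq_qParam] using Function.Periodic.norm_qParam_lt_one one_pos hz

lemma E2_eq_eisensteinSeries_E2 {τ : ℂ} (hτ : τ ∈ UH) :
    E2 τ = EisensteinSeries.E2 ⟨τ, hτ⟩ := by
  rw [EisensteinSeries.E2_eq_tsum_cexp, tsum_pnat_eq_tsum_succ
    (f := fun n ↦ (ArithmeticFunction.sigma 1 n : ℂ) * cexp (2 * π * I * τ) ^ n)]
  rfl

lemma differentiableOn_E2 : DifferentiableOn ℂ E2 UH := by
  refine (UpperHalfPlane.mdifferentiable_iff.mp E2_mdifferentiable).congr fun τ hτ ↦ ?_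
  rw [Function.comp_apply, ofComplex_apply_of_im_pos hτ, E2_eq_eisensteinSeries_E2 hτ]

lemma one_sub_mem_slitPlane {w : ℂ} (hw : ‖w‖ < 1) : 1 - w ∈ slitPlane := by
  simpa [sub_eq_add_neg] using mem_slitPlane_of_norm_lt_one (z := -w) (by simpa using hw)

lemma one_sub_pow_succ_mem_slitPlane {q : ℂ} (hq : ‖q‖ < 1) (n : ℕ) :
    1 - q ^ (n + 1) ∈ slitPlane :=
  one_sub_mem_slitPlane (by simpa using pow_lt_one₀ (norm_nonneg q) hq n.succ_ne_zero)

noncomputable def tsumLogOneSubPow (q : ℂ) : ℂ := ∑' n : ℕ, log (1 - q ^ (n + 1))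

lemma hasSumLocallyUniformlyOn_log_one_sub_pow :
    HasSumLocallyUniformlyOn (fun n q ↦ log (1 - q ^ (n + 1))) tsumLogOneSubPow
      (Metric.ball 0 1) := by
  refine hasSumLocallyUniformlyOn_of_of_forall_exists_nhds fun x hx ↦ ?_
  obtain ⟨r, hxr, hr1⟩ := exists_between (mem_ball_zero_iff.mp hx)
  have hr0 : 0 ≤ r := (norm_nonneg x).trans hxr.le
  refine ⟨Metric.ball 0 r,
    mem_nhdsWithin_of_mem_nhds (Metric.isOpen_ball.mem_nhds (mem_ball_zero_iff.mpr hxr)), ?_⟩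
  have hu : Summable fun n : ℕ ↦ r ^ (n + 1) :=
    (summable_nat_add_iff 1).mpr (summable_geometric_of_lt_one hr0 hr1)
  have h := hu.hasSumUniformlyOn_log_one_add (f := fun n q ↦ -q ^ (n + 1))
    (.of_forall fun n q hq ↦ by
      simpa using pow_le_pow_left₀ (norm_nonneg q) (mem_ball_zero_iff.mp hq).le (n + 1))
  simp only [← sub_eq_add_neg] at h
  exact h

lemma differentiableOn_tsumLogOneSubPow :
    DifferentiableOn ℂ tsumLogOneSubPow (Metric.ball 0 1) :=
  hasSumLocallyUniformlyOn_log_one_sub_pow.summableLocallyUniformlyOn.differentiableOn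
    Metric.isOpen_ball fun n _ hq ↦ ((differentiableAt_const 1).sub
      (differentiableAt_pow _)).clog (one_sub_pow_succ_mem_slitPlane (mem_ball_zero_iff.mp hq) n)

lemma cexp_mul_tsumLogOneSubPow (c : ℂ) {q : ℂ} (hq : ‖q‖ < 1) :
    cexp (c * tsumLogOneSubPow q) = ∏' n : ℕ, (1 - q ^ (n + 1)) ^ c := by
  have hs : Summable fun n : ℕ ↦ log (1 - q ^ (n + 1)) := by
    have hq' : Summable fun n : ℕ ↦ -q ^ (n + 1) :=
      ((summable_nat_add_iff 1 (f := fun n ↦ q ^ n)).mpr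
        (summable_geometric_of_norm_lt_one hq)).neg
    simpa only [← sub_eq_add_neg] using summable_log_one_add_of_summable hq'
  rw [tsumLogOneSubPow, ← tsum_mul_left, ← ((hs.mul_left c).hasSum.cexp).tprod_eq]
  refine tprod_congr fun n ↦ ?_
  rw [Function.comp_apply, cpow_def_of_ne_zero (slitPlane_ne_zero
    (one_sub_pow_succ_mem_slitPlane hq n)), mul_comm]

noncomputable def etaLog (z : ℂ) : ℂ := 2 * π * I * z / 24 + tsumLogOneSubPow (ee z)

lemma etaPow_eq_cexp_mul_etaLog (l : ℝ) {z : ℂ} (hz : z ∈ UH) :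
    etaPow l z = cexp (l * etaLog z) := by
  rw [etaPow, etaLog, mul_add, exp_add, cexp_mul_tsumLogOneSubPow _ (norm_ee_lt_one hz)]
  simp only [ee_natCast_add_one_mul]
  congr 1
  rw [ee]
  ring_nf

lemma eta_eq_etaPow_one (z : ℂ) : ModularForm.eta z = etaPow 1 z := by
  simp only [ModularForm.eta, etaPow, ee_natCast_add_one_mul, ofReal_one, cpow_one]
  simp only [ee_eq_qParam, ModularForm.eta_q]
  congr 1
  simp only [Function.Periodic.qParam]
  push_cast
  ring_nf

lemma differentiableOn_etaLog : DifferentiableOn ℂ etaLog UH :=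
  (by fun_prop : Differentiable ℂ fun z : ℂ ↦ 2 * π * I * z / 24).differentiableOn.add
    (differentiableOn_tsumLogOneSubPow.comp
      (by unfold ee; fun_prop : Differentiable ℂ ee).differentiableOn
      fun _ hz ↦ mem_ball_zero_iff.mpr (norm_ee_lt_one hz))

lemma deriv_etaLog {τ : ℂ} (hτ : τ ∈ UH) : deriv etaLog τ = π * I / 12 * E2 τ := by
  have hd : DifferentiableAt ℂ etaLog τ :=
    differentiableOn_etaLog.differentiableAt (isOpen_UH.mem_nhds hτ)
  have heta : ModularForm.eta =ᶠ[𝓝 τ] cexp ∘ etaLog := by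
    filter_upwards [isOpen_UH.mem_nhds hτ] with z hz
    simp [eta_eq_etaPow_one, etaPow_eq_cexp_mul_etaLog 1 hz]
  calc deriv etaLog τ = logDeriv (cexp ∘ etaLog) τ := by
        rw [logDeriv_comp differentiableAt_exp hd, logDeriv_exp, Pi.one_apply, one_mul]
    _ = π * I / 12 * E2 τ := by
        rw [← (logDeriv_congr_nhds heta).eq_of_nhds, ModularForm.logDeriv_eta_eq_E2 ⟨τ, hτ⟩,
          E2_eq_eisensteinSeries_E2 hτ]

lemma hasDerivAt_etaPow (l : ℝ) {τ : ℂ} (hτ : τ ∈ UH) :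
    HasDerivAt (etaPow l) (2 * π * I * (((l / 2 : ℝ) : ℂ) / 12 * E2 τ * etaPow l τ)) τ := by
  have hd : HasDerivAt etaLog (deriv etaLog τ) τ :=
    (differentiableOn_etaLog.differentiableAt (isOpen_UH.mem_nhds hτ)).hasDerivAt
  have heq : (fun z ↦ cexp (l * etaLog z)) =ᶠ[𝓝 τ] etaPow l := by
    filter_upwards [isOpen_UH.mem_nhds hτ] with z hz
    rw [etaPow_eq_cexp_mul_etaLog l hz]
  refine ((hd.const_mul (l : ℂ)).cexp.congr_of_eventuallyEq heq.symm).congr_deriv ?_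
  rw [deriv_etaLog hτ, ← etaPow_eq_cexp_mul_etaLog l hτ]
  push_cast
  ring

lemma serre_congr {k : ℝ} {g₁ g₂ : ℂ → ℂ} (h : Set.EqOn g₁ g₂ UH) {τ : ℂ} (hτ : τ ∈ UH) :
    serre k g₁ τ = serre k g₂ τ := by
  have hev : g₁ =ᶠ[𝓝 τ] g₂ := eventually_of_mem (isOpen_UH.mem_nhds hτ) h
  rw [serre, serre, Dop, Dop, hev.deriv_eq, h hτ]

lemma differentiableOn_serre (k : ℝ) {g : ℂ → ℂ} (hg : DifferentiableOn ℂ g UH) :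
    DifferentiableOn ℂ (serre k g) UH :=
  ((hg.deriv isOpen_UH).const_mul _).sub ((differentiableOn_E2.const_mul _).mul hg)

lemma differentiableOn_serreIter (k : ℝ) (n : ℕ) {g : ℂ → ℂ} (hg : DifferentiableOn ℂ g UH) :
    DifferentiableOn ℂ (serreIter k n g) UH := by
  induction n with
  | zero => exact hg
  | succ i ih => exact differentiableOn_serre _ ih

lemma serre_mul_of_hasDerivAt {k m : ℝ} {h g : ℂ → ℂ} {τ : ℂ}
    (hh : HasDerivAt h (2 * π * I * ((m : ℂ) / 12 * E2 τ * h τ)) τ)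
    (hg : DifferentiableAt ℂ g τ) :
    serre (k + m) (fun z ↦ h z * g z) τ = h τ * serre k g τ := by
  rw [serre, serre, Dop, Dop, (hh.fun_mul hg.hasDerivAt).deriv]
  field_simp
  push_cast
  ring

lemma serreIter_mul_of_hasDerivAt {k m : ℝ} {h g : ℂ → ℂ}
    (hh : ∀ τ ∈ UH, HasDerivAt h (2 * π * I * ((m : ℂ) / 12 * E2 τ * h τ)) τ)
    (hg : DifferentiableOn ℂ g UH) (n : ℕ) :
    Set.EqOn (serreIter (k + m) n fun z ↦ h z * g z) (fun z ↦ h z * serreIter k n g z) UH := by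
  induction n with
  | zero => exact fun _ _ ↦ rfl
  | succ i ih =>
    intro τ hτ
    rw [serreIter, serreIter, serre_congr ih hτ, add_right_comm]
    exact serre_mul_of_hasDerivAt (hh τ hτ)
      ((differentiableOn_serreIter k i hg).differentiableAt (isOpen_UH.mem_nhds hτ))

/-- `𝔡_{k+ℓ/2}^n(η^ℓ f) = η^ℓ 𝔡_k^n(f)` on ℍ, and consequently
`η^ℓ f` satisfies the MLDE of weight `k+ℓ/2` whenever `f` satisfies the corresponding
MLDE of weight `k`. -/
theorem stmt_7 (k l : ℝ) (n : ℕ) (f : ℂ → ℂ) (hf : DifferentiableOn ℂ f UH) :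
    (∀ τ ∈ UH, serreIter (k + l / 2) n (fun z => etaPow l z * f z) τ
        = etaPow l τ * serreIter k n f τ) ∧
    (∀ P : ℕ → ℂ → ℂ, (∀ j, DifferentiableOn ℂ (P j) UH) →
      (∀ τ ∈ UH, serreIter k n f τ
          + ∑ j ∈ Finset.Icc 2 n, P j τ * serreIter k (n - j) f τ = 0) →
      ∀ τ ∈ UH, serreIter (k + l / 2) n (fun z => etaPow l z * f z) τ
          + ∑ j ∈ Finset.Icc 2 n,
              P j τ * serreIter (k + l / 2) (n - j) (fun z => etaPow l z * f z) τ = 0) := by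
  have hconj (i : ℕ) : Set.EqOn (serreIter (k + l / 2) i fun z ↦ etaPow l z * f z)
      (fun z ↦ etaPow l z * serreIter k i f z) UH :=
    serreIter_mul_of_hasDerivAt (fun _ hτ ↦ hasDerivAt_etaPow l hτ) hf i
  refine ⟨hconj n, fun P _ hMLDE τ hτ ↦ ?_⟩
  calc serreIter (k + l / 2) n (fun z ↦ etaPow l z * f z) τ
        + ∑ j ∈ Finset.Icc 2 n,
            P j τ * serreIter (k + l / 2) (n - j) (fun z ↦ etaPow l z * f z) τ
      = etaPow l τ * (serreIter k n f τ
          + ∑ j ∈ Finset.Icc 2 n, P j τ * serreIter k (n - j) f τ) := by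
        simp only [hconj _ hτ, mul_add, Finset.mul_sum, mul_left_comm]
    _ = 0 := by rw [hMLDE τ hτ, mul_zero]
end
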